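/- arXiv:math/9804153 — 2 statements merged into one kernel-verified Lean document; each statement's English description precedes it below -/
import Mathlib

section
/- If (x_γ)_{γ∈Lim(ω₁)} is a ♣_w-sequence, then the family X = { x_γ \ u : γ ∈ Lim(ω₁), u a finite subset of ω₁ } is a 𝔰𝔱-set of cardinality ℵ₁; in particular ♣_w implies 𝔰𝔱 = ℵ₁. -/
open Cardinal Set

/-- The first uncountable ordinal. -/
noncomputable def ω₁ : Ordinal := (aleph 1).ord

/-- The set of limit ordinals below `ω₁`. -/
def LimOmega1 : Set Ordinal := {γ | γ < ω₁ ∧ Order.IsSuccLimit γ}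

/-- `C` is a club (closed unbounded) subset of `ω₁`. -/
def IsClubIn (C : Set Ordinal) : Prop :=
  C ⊆ Iio ω₁ ∧
    (∀ δ, δ < ω₁ → δ ≠ 0 → (∀ α < δ, ∃ β ∈ C, α < β ∧ β < δ) → δ ∈ C) ∧
    (∀ α < ω₁, ∃ β ∈ C, α < β)

/-- `S` is a stationary subset of `ω₁`: it meets every club subset of `ω₁`. -/
def IsStatIn (S : Set Ordinal) : Prop :=
  S ⊆ Iio ω₁ ∧ ∀ C, IsClubIn C → (S ∩ C).Nonempty

/-- The set of ordinals `s` has order type `ω`. -/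
def HasOtpOmega (s : Set Ordinal) : Prop :=
  Ordinal.type (Subrel ((· < ·) : Ordinal → Ordinal → Prop) (· ∈ s)) = Ordinal.omega0

/-- `x γ` is a cofinal subset of `γ` of order type `ω`. -/
def IsLadderAt (γ : Ordinal) (s : Set Ordinal) : Prop :=
  s ⊆ Iio γ ∧ (∀ α < γ, ∃ β ∈ s, α ≤ β) ∧ HasOtpOmega s

/-- `(x γ)_{γ ∈ Lim(ω₁)}` is a `♣_w`-sequence. -/
def ClubWSeq (x : Ordinal → Set Ordinal) : Prop :=
  (∀ γ ∈ LimOmega1, IsLadderAt γ (x γ)) ∧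
    ∀ y : Set Ordinal, y ⊆ Iio ω₁ → #y = aleph 1 →
      ∃ γ ∈ LimOmega1, (x γ \ y).Finite

/-- `X` is a `𝔰𝔱`-set: a family of countably infinite subsets of `ω₁` such that each
subset of `ω₁` of cardinality `ℵ₁` contains a member of `X`. -/
def IsStickFam (X : Set (Set Ordinal)) : Prop :=
  (∀ s ∈ X, s ⊆ Iio ω₁ ∧ #s = ℵ₀) ∧
    ∀ y : Set Ordinal, y ⊆ Iio ω₁ → #y = aleph 1 → ∃ s ∈ X, s ⊆ y

/-- The cardinal `𝔰𝔱`: the least cardinality of a `𝔰𝔱`-set. -/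
noncomputable def stick : Cardinal :=
  sInf {c | ∃ X : Set (Set Ordinal), IsStickFam X ∧ #X = c}

/-!
Removing finitely many points from an `ω`-sequence leaves it infinite, so every
`x γ \ u` is countably infinite; and if `y` has size `ℵ₁`, the `♣_w` property gives
`γ` with `x γ \ y` finite, whence `x γ \ (x γ \ y) ⊆ y`. There are only `ℵ₁`
choices of `γ` and of finite `u ⊆ ω₁`. Conversely no countable family `X` of
countable sets can work: `ω₁ \ ⋃ X` has size `ℵ₁` and contains no member of `X`.
-/

universe u v

namespace Cardinal

theorem mk_sdiff_eq_of_lt {α : Type*} {A T : Set α} (hA : ℵ₀ ≤ #A) (hT : #T < #A) :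
    #(A \ T : Set α) = #A := by
  refine le_antisymm (mk_le_mk_of_subset sdiff_subset) (not_lt.1 fun hlt => ?_)
  have hAT : #(A ∩ T : Set α) < #A := (mk_le_mk_of_subset inter_subset_right).trans_lt hT
  have hsum := mk_sdiff_add_mk (inter_subset_left : A ∩ T ⊆ A)
  rw [sdiff_self_inter] at hsum
  exact (add_lt_of_lt hA hlt hAT).ne hsum

theorem mk_setOf_subset_finite_le {α : Type*} {A : Set α} (hA : A.Infinite) :
    #{u : Set α | u ⊆ A ∧ u.Finite} ≤ #A := by
  have := hA.to_subtype
  calc #{u : Set α | u ⊆ A ∧ u.Finite}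
      ≤ #(range fun t : Finset A => ((↑) '' (t : Set A) : Set α)) := by
        refine mk_le_mk_of_subset fun u ⟨hu, hfin⟩ =>
          ⟨(hfin.preimage Subtype.val_injective.injOn).toFinset, ?_⟩
        simp [hu]
    _ ≤ #(Finset A) := mk_range_le
    _ = #A := mk_finset_of_infinite A

end Cardinal

theorem Set.exists_bijOn_of_equiv {α β : Type*} [Nonempty β] {s : Set α} {t : Set β}
    (e : s ≃ t) : ∃ f : α → β, BijOn f s t := by
  classical
  refine ⟨fun a => if h : a ∈ s then e ⟨a, h⟩ else Classical.arbitrary β, ?_, ?_, ?_⟩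
  · intro a ha
    simp [ha]
  · intro a ha b hb hab
    have := e.injective (Subtype.ext (by simpa [ha, hb] using hab))
    simpa using congrArg Subtype.val this
  · intro b hb
    exact ⟨e.symm ⟨b, hb⟩, (e.symm ⟨b, hb⟩).2, by simp⟩

theorem mk_Iio_omega1 : #(Iio ω₁.{u}) = ℵ₁ := by
  rw [ω₁, mk_Iio_ordinal, card_ord, lift_aleph]
  simp

theorem exists_bijOn_Iio_omega1 :
    ∃ f : Ordinal.{u} → Ordinal.{v}, BijOn f (Iio ω₁) (Iio ω₁) := by
  have : lift.{v + 1} #(Iio ω₁.{u}) = lift.{u + 1} #(Iio ω₁.{v}) := by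
    simp only [mk_Iio_omega1, lift_aleph, Ordinal.lift_one]
  exact exists_bijOn_of_equiv (lift_mk_eq'.1 this).some

theorem HasOtpOmega.mk_eq {s : Set Ordinal} (h : HasOtpOmega s) : #s = ℵ₀ := by
  simpa using congrArg Ordinal.card h

namespace IsStickFam

variable {X : Set (Set Ordinal.{u})}

theorem aleph_one_le_mk (hX : IsStickFam X) : ℵ₁ ≤ #X := by
  by_contra! hlt
  have hU : (⋃₀ X).Countable :=
    (le_aleph0_iff_set_countable.1 (lt_aleph_one_iff.1 hlt)).sUnion fun s hs =>
      le_aleph0_iff_set_countable.1 (hX.1 s hs).2.le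
  have hy : #(Iio ω₁ \ ⋃₀ X : Set Ordinal) = ℵ₁ := by
    rw [mk_sdiff_eq_of_lt] <;> rw [mk_Iio_omega1]
    · exact aleph0_le_aleph 1
    · exact (le_aleph0_iff_set_countable.2 hU).trans_lt aleph0_lt_aleph_one
  obtain ⟨s, hsX, hsy⟩ := hX.2 _ sdiff_subset hy
  obtain ⟨a, ha⟩ : s.Nonempty := by
    rw [← nonempty_coe_sort, ← mk_ne_zero_iff, (hX.1 s hsX).2]
    exact aleph0_ne_zero
  exact (hsy ha).2 ⟨s, hsX, ha⟩

theorem image {f : Ordinal.{u} → Ordinal.{v}} (hf : BijOn f (Iio ω₁) (Iio ω₁))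
    (hX : IsStickFam X) : IsStickFam (image f '' X) := by
  refine ⟨?_, fun y hyω hy => ?_⟩
  · rintro _ ⟨s, hs, rfl⟩
    obtain ⟨hsω, hs⟩ := hX.1 s hs
    refine ⟨(hf.mapsTo.mono_left hsω).image_subset, lift_injective ?_⟩
    rw [mk_image_eq_of_injOn_lift _ _ (hf.injOn.mono hsω), hs, lift_aleph0, lift_aleph0]
  · have hpre : f '' (Iio ω₁ ∩ f ⁻¹' y) = y := by
      rw [image_inter_preimage, hf.image_eq, inter_eq_right.2 hyω]
    have hcard : #(Iio ω₁ ∩ f ⁻¹' y : Set Ordinal) = ℵ₁ := by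
      apply lift_injective.{v + 1}
      rw [← mk_image_eq_of_injOn_lift _ _ (hf.injOn.mono inter_subset_left), hpre, hy,
        lift_aleph, lift_aleph, Ordinal.lift_one, Ordinal.lift_one]
    obtain ⟨s, hsX, hsy⟩ := hX.2 _ inter_subset_left hcard
    exact ⟨f '' s, mem_image_of_mem _ hsX, image_subset_iff.2 (hsy.trans inter_subset_right)⟩

/-- `stick` is universe polymorphic, so the witness family is first transported along a bijection
between the countable ordinals of the two universes. -/
theorem stick_eq_aleph_one (hX : IsStickFam X) (hc : #X ≤ ℵ₁) : stick.{v} = ℵ₁ := by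
  obtain ⟨f, hf⟩ := exists_bijOn_Iio_omega1.{u, v}
  have hY : #(Set.image f '' X) ∈ {c | ∃ Y : Set (Set Ordinal.{v}), IsStickFam Y ∧ #Y = c} :=
    ⟨_, hX.image hf, rfl⟩
  refine le_antisymm ((csInf_le' hY).trans ?_) (le_csInf ⟨_, hY⟩ ?_)
  · rw [← lift_le.{u + 1}, lift_aleph, Ordinal.lift_one]
    exact mk_image_le_lift.trans (by simpa using hc)
  · rintro _ ⟨Z, hZ, rfl⟩
    exact hZ.aleph_one_le_mk

end IsStickFam

def cofiniteSubladders (x : Ordinal → Set Ordinal) : Set (Set Ordinal) :=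
  {s | ∃ γ ∈ LimOmega1, ∃ u : Set Ordinal, u ⊆ Iio ω₁ ∧ u.Finite ∧ s = x γ \ u}

theorem mk_cofiniteSubladders_le (x : Ordinal.{u} → Set Ordinal.{u}) :
    #(cofiniteSubladders x) ≤ ℵ₁ := by
  have hω : ℵ₀ ≤ #(Iio ω₁.{u}) := mk_Iio_omega1.symm ▸ aleph0_le_aleph 1
  calc #(cofiniteSubladders x)
      ≤ #(image2 (fun γ u => x γ \ u) (Iio ω₁) {u : Set Ordinal | u ⊆ Iio ω₁ ∧ u.Finite}) := by
        refine mk_le_mk_of_subset ?_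
        rintro _ ⟨γ, hγ, u, huω, hu, rfl⟩
        exact mem_image2_of_mem hγ.1 ⟨huω, hu⟩
    _ ≤ #(Iio ω₁) * #(Iio ω₁) := mk_image2_le.trans <|
        mul_le_mul_right (mk_setOf_subset_finite_le (infinite_coe_iff.1 (infinite_iff.2 hω))) _
    _ = ℵ₁ := by rw [mul_eq_self hω, mk_Iio_omega1]

namespace ClubWSeq

variable {x : Ordinal → Set Ordinal}

theorem subset_Iio_omega1 (hx : ClubWSeq x) {γ : Ordinal} (hγ : γ ∈ LimOmega1) :
    x γ ⊆ Iio ω₁ :=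
  fun _ hα => lt_trans ((hx.1 γ hγ).1 hα) hγ.1

theorem isStickFam_cofiniteSubladders (hx : ClubWSeq x) : IsStickFam (cofiniteSubladders x) := by
  refine ⟨?_, fun y hyω hy => ?_⟩
  · rintro _ ⟨γ, hγ, u, -, hu, rfl⟩
    have hxγ := (hx.1 γ hγ).2.2.mk_eq
    refine ⟨sdiff_subset.trans (hx.subset_Iio_omega1 hγ), ?_⟩
    rw [mk_sdiff_eq_of_lt, hxγ] <;> rw [hxγ]
    exact lt_aleph0_iff_set_finite.2 hu
  · obtain ⟨γ, hγ, hfin⟩ := hx.2 y hyω hy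
    have huω : x γ \ y ⊆ Iio ω₁ := sdiff_subset.trans (hx.subset_Iio_omega1 hγ)
    refine ⟨x γ \ (x γ \ y), ⟨γ, hγ, _, huω, hfin, rfl⟩, ?_⟩
    rw [sdiff_sdiff_right_self]
    exact inter_subset_right

end ClubWSeq

theorem clubW_gives_stick_set (x : Ordinal → Set Ordinal) (hx : ClubWSeq x) :
    (IsStickFam {s | ∃ γ ∈ LimOmega1, ∃ u : Set Ordinal, u ⊆ Iio ω₁ ∧ u.Finite ∧ s = x γ \ u} ∧
      #({s | ∃ γ ∈ LimOmega1, ∃ u : Set Ordinal, u ⊆ Iio ω₁ ∧ u.Finite ∧ s = x γ \ u} :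
        Set (Set Ordinal)) = aleph 1) ∧
    stick = aleph 1 := by
  have hX := hx.isStickFam_cofiniteSubladders
  have hcard : #(cofiniteSubladders x) = ℵ₁ :=
    le_antisymm (mk_cofiniteSubladders_le x) hX.aleph_one_le_mk
  exact ⟨⟨hX, hcard⟩, hX.stick_eq_aleph_one hcard.le⟩
end

section
/- (Miyamoto) For any set X and any family of cardinals (κ_i)_{i∈X}, the pseudo-product P = Π*_{i∈X}Fn(κ_i,2) (countable supports, i.e., κ = ℵ₁) satisfies Axiom A, witnessed by the relations ≤_0 = ≤ and ≤_n = ≤_h for every n ≥ 1; that is: (i) p ≤_{n+1} q implies p ≤_n q, and p ≤_0 q implies p ≤ q; (ii) every sequence (p_n)_{n∈ω} with p_{n+1} ≤_{n+1} p_n for all n has a q ∈ P with q ≤_n p_n for all n; (iii) for every p ∈ P, every n ∈ ω, and every maximal antichain A ⊆ P there is q ≤_n p such that only countably many elements of A are compatible with q. -/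
open Cardinal Set

/-- `Fn A`: finite partial functions from `A` to `2` (represented as `Bool`). -/
def Fn (A : Type*) : Type _ :=
  {p : A → Option Bool // {a | p a ≠ none}.Finite}

/-- `Fn A` ordered by reverse inclusion: `q ≤ p` iff `q` extends `p`. -/
instance Fn.instPartialOrder (A : Type*) : PartialOrder (Fn A) where
  le q p := ∀ a, p.1 a ≠ none → q.1 a = p.1 a
  le_refl p := fun _ _ => rfl
  le_trans r q p hrq hqp := fun a ha => by
    have h1 := hqp a ha
    have h2 := hrq a (h1 ▸ ha)
    rw [h2, h1]
  le_antisymm p q h h' := Subtype.ext <| funext fun a => by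
    by_cases hq : q.1 a = none
    · by_cases hp : p.1 a = none
      · rw [hp, hq]
      · exact (h' a hp).symm
    · exact h a hq

/-- The empty condition is the greatest element of `Fn A`. -/
instance Fn.instOrderTop (A : Type*) : OrderTop (Fn A) where
  top := ⟨fun _ => none, by simp⟩
  le_top p := fun a ha => absurd rfl ha

/-- The pseudo-product `Π*_{i∈X} P i` with countable supports. -/
def PseudoProd (P : X → Type*) [∀ i, PartialOrder (P i)] [∀ i, OrderTop (P i)] : Type _ :=
  {p : ∀ i, P i // #{i | p i ≠ ⊤} ≤ ℵ₀}

variable {X : Type} {P : X → Type} [∀ i, PartialOrder (P i)] [∀ i, OrderTop (P i)]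

/-- The pseudo-product ordering: `p ≤ q` iff `p` is pointwise `≤ q` and
`p(i) < q(i) < 1` holds for only finitely many `i`. -/
def PseudoProd.ple (p q : PseudoProd P) : Prop :=
  (∀ i, p.1 i ≤ q.1 i) ∧ {i | p.1 i < q.1 i ∧ q.1 i < ⊤}.Finite

/-- The horizontal relation: `p ≤_h q` iff `supp p ⊇ supp q` and `p` agrees with
`q` on `supp q`. -/
def PseudoProd.pleH (p q : PseudoProd P) : Prop :=
  {i | q.1 i ≠ ⊤} ⊆ {i | p.1 i ≠ ⊤} ∧ ∀ i, q.1 i ≠ ⊤ → p.1 i = q.1 i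

/-- The witnessing sequence of relations for Axiom A: `≤₀` is the pseudo-product
ordering and `≤ₙ` is `≤_h` for `n ≥ 1`. -/
def PseudoProd.axSeq (n : ℕ) (p q : PseudoProd P) : Prop :=
  if n = 0 then p.ple q else p.pleH q

/-- `p` and `q` are compatible. -/
def PseudoProd.Compat (p q : PseudoProd P) : Prop :=
  ∃ r : PseudoProd P, r.ple p ∧ r.ple q

/-- `A` is a maximal antichain: pairwise incompatible and no proper superset of it
is pairwise incompatible. -/
def PseudoProd.MaxAntichain (A : Set (PseudoProd P)) : Prop :=
  (∀ p ∈ A, ∀ q ∈ A, p ≠ q → ¬p.Compat q) ∧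
    ∀ B : Set (PseudoProd P), A ⊆ B →
      (∀ p ∈ B, ∀ q ∈ B, p ≠ q → ¬PseudoProd.Compat p q) → B = A


/-! Parts (i) and (ii) are immediate: `≤_h` implies `≤`, and a `≤_h`-descending sequence has
its coordinatewise union as a `≤_h`-lower bound.

For (iii), build a `≤_h`-descending sequence `Q_k` below `p` together with an increasing countable
set `Z_k` of points `(i, t)`. A task is a finite condition whose points lie in some `Z_m`; there are
countably many, and by bookkeeping each is handled at some stage `k`: meet the task with `Q_k`,
choose `s` below the result and below some element of `A`, let `Q_{k+1}` take the values of `s` on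
the coordinates not yet in the support of `Q_k`, and add the points of `s` to `Z`. Let `q` be the
fusion. If `a ∈ A` is compatible with `q`, then `a` and `q` disagree on only finitely many common
coordinates, so the restriction of `a` to those coordinates and to the points of `⋃ Z_k` is a
task; the `s` chosen for it is compatible with `a`, and as `s` lies below a single element of
the antichain `A`, that element is `a`. Hence only countably many elements of `A` meet `q`. -/

namespace Fn

variable {A : Type*}

@[ext]
theorem ext {x y : Fn A} (h : ∀ a, x.1 a = y.1 a) : x = y :=
  Subtype.ext (funext h)

theorem ne_top_iff {x : Fn A} : x ≠ ⊤ ↔ ∃ a, x.1 a ≠ none :=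
  ⟨fun h => by by_contra! h'; exact h (Fn.ext h'), fun ⟨a, ha⟩ h =>
    ha (by rw [h]; rfl)⟩

def Agree (x y : Fn A) : Prop :=
  ∀ a, x.1 a ≠ none → y.1 a ≠ none → x.1 a = y.1 a

theorem Agree.refl (x : Fn A) : x.Agree x := fun _ _ _ => rfl

theorem Agree.symm {x y : Fn A} (h : x.Agree y) : y.Agree x :=
  fun a hy hx => (h a hx hy).symm

theorem Agree.mono {x y x' y' : Fn A} (h : x.Agree y) (hx : x ≤ x') (hy : y ≤ y') :
    x'.Agree y' := fun a hx' hy' => by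
  rw [← hx a hx', ← hy a hy'] at *
  exact h a hx' hy'

noncomputable def merge (x y : Fn A) : Fn A :=
  ⟨fun a => (x.1 a).or (y.1 a), (x.2.union y.2).subset fun a h => by
    rwa [mem_union, mem_ofPred_eq, mem_ofPred_eq, ← not_and_or, ← Option.or_eq_none_iff]⟩

theorem merge_le_left {x y : Fn A} : x.merge y ≤ x :=
  fun a ha => by
    obtain ⟨b, hb⟩ := Option.ne_none_iff_exists'.1 ha
    simp [merge, hb]

theorem merge_le_right {x y : Fn A} (h : x.Agree y) : x.merge y ≤ y := fun a ha => by
  by_cases hx : x.1 a = none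
  · simp [merge, hx]
  · obtain ⟨b, hb⟩ := Option.ne_none_iff_exists'.1 hx
    simp [merge, hb, ← h a hx ha]

theorem merge_top_left (y : Fn A) : (⊤ : Fn A).merge y = y :=
  Fn.ext fun _ => Option.none_or

theorem merge_top_right (x : Fn A) : x.merge ⊤ = x :=
  Fn.ext fun _ => Option.or_none

theorem merge_self (x : Fn A) : x.merge x = x :=
  Fn.ext fun _ => Option.or_self

open Classical in
noncomputable def restrict (x : Fn A) (s : Set A) : Fn A :=
  ⟨fun a => if a ∈ s then x.1 a else none, x.2.subset fun a h => by
    by_cases ha : a ∈ s <;> simp_all⟩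

theorem restrict_apply_of_mem {x : Fn A} {s : Set A} {a : A} (ha : a ∈ s) :
    (x.restrict s).1 a = x.1 a := by
  simp [restrict, ha]

theorem mem_of_restrict_apply_ne_none {x : Fn A} {s : Set A} {a : A}
    (ha : (x.restrict s).1 a ≠ none) : a ∈ s := by
  by_contra h
  simp [restrict, h] at ha

theorem le_restrict (x : Fn A) (s : Set A) : x ≤ x.restrict s := fun _ ha =>
  (restrict_apply_of_mem (mem_of_restrict_apply_ne_none ha)).symm

end Fn

namespace PseudoProd

instance : Top (PseudoProd P) :=
  ⟨⟨fun _ => ⊤, by simp⟩⟩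

theorem countable_support (p : PseudoProd P) : {i | p.1 i ≠ ⊤}.Countable :=
  le_aleph0_iff_set_countable.1 p.2

theorem ple_refl (p : PseudoProd P) : p.ple p :=
  ⟨fun _ => le_rfl, by simp⟩

theorem ple_trans {p q r : PseudoProd P} (hpq : p.ple q) (hqr : q.ple r) : p.ple r := by
  refine ⟨fun i => (hpq.1 i).trans (hqr.1 i), (hpq.2.union hqr.2).subset ?_⟩
  rintro i ⟨hpr, hr⟩
  rcases (hpq.1 i).lt_or_eq with hpq' | hpq'
  · exact Or.inl ⟨hpq', (hqr.1 i).trans_lt hr⟩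
  · exact Or.inr ⟨hpq' ▸ hpr, hr⟩

theorem pleH_refl (p : PseudoProd P) : p.pleH p :=
  ⟨subset_rfl, fun _ _ => rfl⟩

theorem pleH_trans {p q r : PseudoProd P} (hpq : p.pleH q) (hqr : q.pleH r) : p.pleH r :=
  ⟨hqr.1.trans hpq.1, fun i hi => (hpq.2 i (hqr.1 hi)).trans (hqr.2 i hi)⟩

theorem ple_of_pleH {p q : PseudoProd P} (h : p.pleH q) : p.ple q := by
  refine ⟨fun i => ?_, finite_empty.subset fun i hi => hi.1.ne (h.2 i hi.2.ne)⟩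
  by_cases hq : q.1 i = ⊤
  · exact hq ▸ le_top
  · exact (h.2 i hq).le

theorem axSeq_zero {p q : PseudoProd P} : axSeq 0 p q ↔ p.ple q :=
  Iff.rfl

theorem axSeq_succ {n : ℕ} {p q : PseudoProd P} : axSeq (n + 1) p q ↔ p.pleH q := by
  simp [axSeq]

theorem axSeq_of_pleH {n : ℕ} {p q : PseudoProd P} (h : p.pleH q) : axSeq n p q := by
  cases n with
  | zero => exact ple_of_pleH h
  | succ n => exact axSeq_succ.2 h

theorem exists_pleH_of_chain (f : ℕ → PseudoProd P) (hf : ∀ k, (f (k + 1)).pleH (f k)) :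
    ∃ q : PseudoProd P, ∀ n, q.pleH (f n) := by
  classical
  have hchain : ∀ m n, m ≤ n → (f n).pleH (f m) := fun m =>
    Nat.le_induction (pleH_refl _) fun n _ ih => pleH_trans (hf n) ih
  let g : ∀ i, P i := fun i => if h : ∃ n, (f n).1 i ≠ ⊤ then (f (Nat.find h)).1 i else ⊤
  have hg : ∀ n i, (f n).1 i ≠ ⊤ → g i = (f n).1 i := fun n i hi => by
    have h : ∃ n, (f n).1 i ≠ ⊤ := ⟨n, hi⟩
    simp only [g, dif_pos h]
    exact ((hchain _ n (Nat.find_min' h hi)).2 i (Nat.find_spec h)).symm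
  have hsupp : {i | g i ≠ ⊤} ⊆ ⋃ n, {i | (f n).1 i ≠ ⊤} := fun i hi => by
    by_contra h
    simp only [mem_iUnion, mem_ofPred_eq, not_exists, not_not] at h
    simp [g, h] at hi
  refine ⟨⟨g, le_aleph0_iff_set_countable.2
    ((countable_iUnion fun n => (f n).countable_support).mono hsupp)⟩, fun n =>
      ⟨fun i hi => ?_, fun i hi => hg n i hi⟩⟩
  show g i ≠ ⊤
  rwa [hg n i hi]

theorem Compat.symm {p q : PseudoProd P} (h : p.Compat q) : q.Compat p :=
  let ⟨w, hp, hq⟩ := h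
  ⟨w, hq, hp⟩

theorem Compat.mono_right {p q r : PseudoProd P} (h : p.Compat q) (hqr : q.ple r) :
    p.Compat r :=
  let ⟨w, hp, hq⟩ := h
  ⟨w, hp, ple_trans hq hqr⟩

theorem MaxAntichain.exists_compat {A : Set (PseudoProd P)} (hA : MaxAntichain A)
    (r : PseudoProd P) : ∃ a ∈ A, a.Compat r := by
  by_contra! h
  have hrA : insert r A = A := hA.2 _ (subset_insert r A) <| by
    rintro p (rfl | hp) q (rfl | hq) hpq
    · exact absurd rfl hpq
    · exact fun hc => h q hq hc.symm
    · exact h p hp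
    · exact hA.1 p hp q hq hpq
  exact h r (hrA ▸ mem_insert r A) ⟨r, ple_refl r, ple_refl r⟩

theorem MaxAntichain.subsingleton_compat {A : Set (PseudoProd P)} (hA : MaxAntichain A)
    {s c : PseudoProd P} (hc : c ∈ A) (hsc : s.ple c) : {a ∈ A | a.Compat s}.Subsingleton := by
  have h : ∀ a ∈ {a ∈ A | a.Compat s}, a = c := fun a ⟨haA, has⟩ => by
    by_contra hac
    exact hA.1 a haA c hc hac (has.mono_right hsc)
  exact fun a ha b hb => (h a ha).trans (h b hb).symm

def clash (p q : PseudoProd P) : Set X :=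
  {i | p.1 i ≠ ⊤ ∧ q.1 i ≠ ⊤ ∧ p.1 i ≠ q.1 i}

theorem Compat.clash_finite {p q : PseudoProd P} (h : p.Compat q) : (clash p q).Finite := by
  obtain ⟨w, hwp, hwq⟩ := h
  refine (hwp.2.union hwq.2).subset fun i ⟨hp, hq, hpq⟩ => ?_
  by_cases hw : w.1 i = p.1 i
  · exact Or.inr ⟨(hwq.1 i).lt_of_ne (by rwa [hw]), lt_top_iff_ne_top.2 hq⟩
  · exact Or.inl ⟨(hwp.1 i).lt_of_ne hw, lt_top_iff_ne_top.2 hp⟩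

open Classical in
noncomputable def absorb (Q s : PseudoProd P) : PseudoProd P :=
  ⟨fun i => if Q.1 i = ⊤ then s.1 i else Q.1 i, le_aleph0_iff_set_countable.2 <|
    (Q.countable_support.union s.countable_support).mono fun i hi => by
      by_cases hQ : Q.1 i = ⊤ <;> simp_all⟩

theorem absorb_apply_of_eq_top {Q : PseudoProd P} (s : PseudoProd P) {i : X} (hQ : Q.1 i = ⊤) :
    (absorb Q s).1 i = s.1 i :=
  if_pos hQ

theorem absorb_apply_of_ne_top {Q : PseudoProd P} (s : PseudoProd P) {i : X} (hQ : Q.1 i ≠ ⊤) :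
    (absorb Q s).1 i = Q.1 i :=
  if_neg hQ

theorem absorb_pleH (Q s : PseudoProd P) : (absorb Q s).pleH Q :=
  ⟨fun i hi => by rwa [mem_ofPred_eq, absorb_apply_of_ne_top s hi], fun i hi =>
    absorb_apply_of_ne_top s hi⟩

theorem apply_eq_of_pleH_absorb_of_eq_top {Q s q : PseudoProd P} (hq : q.pleH (absorb Q s))
    {i : X} (hQ : Q.1 i = ⊤) (hi : s.1 i ≠ ⊤) : q.1 i = s.1 i := by
  rw [← absorb_apply_of_eq_top s hQ]
  exact hq.2 i (by rwa [absorb_apply_of_eq_top s hQ])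

theorem apply_eq_of_pleH_absorb_of_ne_top {Q s q : PseudoProd P} (hq : q.pleH (absorb Q s))
    {i : X} (hQ : Q.1 i ≠ ⊤) : q.1 i = Q.1 i :=
  (pleH_trans hq (absorb_pleH Q s)).2 i hQ

theorem ne_top_and_le_of_pleH_absorb {Q s q : PseudoProd P} (hs : s.ple Q)
    (hq : q.pleH (absorb Q s)) {i : X} (hi : s.1 i ≠ ⊤) :
    q.1 i ≠ ⊤ ∧ s.1 i ≤ q.1 i := by
  by_cases hQ : Q.1 i = ⊤
  · rw [apply_eq_of_pleH_absorb_of_eq_top hq hQ hi]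
    exact ⟨hi, le_rfl⟩
  · rw [apply_eq_of_pleH_absorb_of_ne_top hq hQ]
    exact ⟨hQ, hs.1 i⟩

theorem finite_ne_of_pleH_absorb {Q s q : PseudoProd P} (hs : s.ple Q)
    (hq : q.pleH (absorb Q s)) : {i | s.1 i ≠ ⊤ ∧ s.1 i ≠ q.1 i}.Finite := by
  refine hs.2.subset fun i ⟨hi, hsq⟩ => ?_
  by_cases hQ : Q.1 i = ⊤
  · exact absurd (apply_eq_of_pleH_absorb_of_eq_top hq hQ hi).symm hsq
  · rw [apply_eq_of_pleH_absorb_of_ne_top hq hQ] at hsq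
    exact ⟨(hs.1 i).lt_of_ne hsq, lt_top_iff_ne_top.2 hQ⟩

end PseudoProd

/-- The pseudo-product `Π*_{i ∈ X} Fn(T i, 2)`. -/
abbrev FnProd (T : X → Type) : Type :=
  PseudoProd (fun i => Fn (T i))

namespace PseudoProd

variable {T : X → Type}

def points (s : FnProd T) : Set (Σ i, T i) :=
  {z | (s.1 z.1).1 z.2 ≠ none}

theorem apply_ne_top_iff {s : FnProd T} {i : X} :
    s.1 i ≠ ⊤ ↔ ∃ t, ⟨i, t⟩ ∈ s.points :=
  Fn.ne_top_iff

theorem points_subset_biUnion (s : FnProd T) :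
    s.points ⊆ ⋃ i ∈ {i | s.1 i ≠ ⊤}, Sigma.mk i '' {t | (s.1 i).1 t ≠ none} :=
  fun ⟨_, t⟩ ht => mem_biUnion (apply_ne_top_iff.2 ⟨t, ht⟩) (mem_image_of_mem _ ht)

theorem countable_points (s : FnProd T) : s.points.Countable :=
  (s.countable_support.biUnion fun i _ => ((s.1 i).2.image _).countable).mono
    s.points_subset_biUnion

theorem finite_points {s : FnProd T} (hs : {i | s.1 i ≠ ⊤}.Finite) : s.points.Finite :=
  (hs.biUnion fun i _ => (s.1 i).2.image _).subset s.points_subset_biUnion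

noncomputable def merge (x y : FnProd T) : FnProd T :=
  ⟨fun i => (x.1 i).merge (y.1 i), le_aleph0_iff_set_countable.2 <|
    (x.countable_support.union y.countable_support).mono fun i hi => by
      by_contra! h
      simp only [mem_union, mem_ofPred_eq, not_or, not_not] at h
      exact hi (by show Fn.merge _ _ = ⊤; rw [h.1, h.2, Fn.merge_top_left])⟩

theorem merge_apply (x y : FnProd T) (i : X) : (merge x y).1 i = (x.1 i).merge (y.1 i) :=
  rfl

theorem merge_ple_left {x y : FnProd T} (h : (clash x y).Finite) : (merge x y).ple x := by
  refine ⟨fun i => Fn.merge_le_left, h.subset fun i ⟨hlt, htop⟩ => ⟨htop.ne, ?_, ?_⟩⟩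
  · exact fun hy => hlt.ne (by rw [merge_apply, hy, Fn.merge_top_right])
  · exact fun hxy => hlt.ne (by rw [merge_apply, hxy, Fn.merge_self])

theorem merge_ple_right {x y : FnProd T} (hxy : ∀ i, (x.1 i).Agree (y.1 i))
    (h : (clash x y).Finite) : (merge x y).ple y := by
  refine ⟨fun i => Fn.merge_le_right (hxy i),
    h.subset fun i ⟨hlt, htop⟩ => ⟨?_, htop.ne, ?_⟩⟩
  · exact fun hx => hlt.ne (by rw [merge_apply, hx, Fn.merge_top_left])
  · exact fun hxy => hlt.ne (by rw [merge_apply, hxy, Fn.merge_self])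

theorem Compat.agree {p q : FnProd T} (h : p.Compat q) (i : X) : (p.1 i).Agree (q.1 i) :=
  let ⟨w, hwp, hwq⟩ := h
  (Fn.Agree.refl (w.1 i)).mono (hwp.1 i) (hwq.1 i)

theorem compat_iff {p q : FnProd T} :
    p.Compat q ↔ (∀ i, (p.1 i).Agree (q.1 i)) ∧ (clash p q).Finite :=
  ⟨fun h => ⟨h.agree, h.clash_finite⟩, fun ⟨h, hf⟩ =>
    ⟨merge p q, merge_ple_left hf, merge_ple_right h hf⟩⟩

noncomputable def restrict (a : FnProd T) (S : Set (Σ i, T i)) : FnProd T :=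
  ⟨fun i => (a.1 i).restrict (Sigma.mk i ⁻¹' S), le_aleph0_iff_set_countable.2 <|
    a.countable_support.mono fun _ hi => ne_top_of_le_ne_top hi (Fn.le_restrict _ _)⟩

theorem points_restrict_subset (a : FnProd T) (S : Set (Σ i, T i)) :
    (a.restrict S).points ⊆ S :=
  fun ⟨i, _⟩ hz => Fn.mem_of_restrict_apply_ne_none (x := a.1 i) (s := Sigma.mk i ⁻¹' S) hz

theorem support_restrict_subset {a : FnProd T} {S : Set (Σ i, T i)} {F : Set X}
    (hS : ∀ z ∈ S, z.1 ∈ F) : {i | (a.restrict S).1 i ≠ ⊤} ⊆ F := fun _ hi =>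
  let ⟨_, ht⟩ := apply_ne_top_iff.1 hi
  hS _ (points_restrict_subset a S ht)

theorem Compat.compat_of_agree_on_clash {a q s : FnProd T} (ha : a.Compat q)
    (hsq : ∀ i, s.1 i ≠ ⊤ → q.1 i ≠ ⊤ ∧ s.1 i ≤ q.1 i)
    (hfin : {i | s.1 i ≠ ⊤ ∧ s.1 i ≠ q.1 i}.Finite)
    (hclash : ∀ i ∈ clash a q, (a.1 i).Agree (s.1 i)) : a.Compat s := by
  have hdiff : ∀ i ∉ clash a q, a.1 i ≠ ⊤ → s.1 i ≠ ⊤ →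
      a.1 i = q.1 i ∧ s.1 i ≤ q.1 i :=
    fun i hi ha hs => ⟨by by_contra h; exact hi ⟨ha, (hsq i hs).1, h⟩, (hsq i hs).2⟩
  refine compat_iff.2 ⟨fun i => ?_, (ha.clash_finite.union hfin).subset ?_⟩
  · by_cases hi : i ∈ clash a q
    · exact hclash i hi
    by_cases ha : a.1 i = ⊤
    · exact ha ▸ (Fn.Agree.refl _).mono le_top le_rfl
    by_cases hs : s.1 i = ⊤
    · exact hs ▸ (Fn.Agree.refl _).mono le_rfl le_top
    obtain ⟨haq, hsq⟩ := hdiff i hi ha hs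
    exact ((Fn.Agree.refl _).mono le_rfl (haq ▸ hsq)).symm
  · rintro i ⟨ha, hs, has⟩
    by_contra hi
    obtain ⟨haq, -⟩ := hdiff i (fun h => hi (Or.inl h)) ha hs
    exact hi (Or.inr ⟨hs, haq ▸ has.symm⟩)

/-- On the clash coordinates `s` extends the task, which copies `a` on every point of
`Z ⊇ s.points`; on all other coordinates `s` lies below `q`, which coincides with `a` there. -/
theorem Compat.compat_of_pleH_absorb {a q Q s : FnProd T} {Z : Set (Σ i, T i)}
    (ha : a.Compat q) (hs : s.ple (merge (a.restrict {z | z.1 ∈ clash a q ∧ z ∈ Z}) Q))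
    (hsZ : s.points ⊆ Z) (hq : q.pleH (absorb Q s)) : a.Compat s := by
  set e := a.restrict {z | z.1 ∈ clash a q ∧ z ∈ Z}
  have hqQ : q.ple Q := ple_of_pleH (pleH_trans hq (absorb_pleH Q s))
  have he : {i | e.1 i ≠ ⊤} ⊆ clash a q := support_restrict_subset fun _ hz => hz.1
  have hsQ : s.ple Q := ple_trans hs <| merge_ple_right
    (fun i => (ha.agree i).mono (Fn.le_restrict _ _) (hqQ.1 i))
    ((ha.clash_finite.subset he).subset fun i hi => hi.1)
  refine ha.compat_of_agree_on_clash (fun i => ne_top_and_le_of_pleH_absorb hsQ hq)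
    (finite_ne_of_pleH_absorb hsQ hq) fun i hi t hat hst => ?_
  have het : (e.1 i).1 t = (a.1 i).1 t := Fn.restrict_apply_of_mem ⟨hi, hsZ hst⟩
  rw [← het] at hat ⊢
  exact ((hs.1 i).trans Fn.merge_le_left t hat).symm

def graph (s : FnProd T) : Set ((Σ i, T i) × Bool) :=
  {z | (s.1 z.1.1).1 z.1.2 = some z.2}

theorem graph_injective : Function.Injective (graph (T := T)) := fun _ _ h =>
  Subtype.ext <| funext fun i => Fn.ext fun t => Option.ext fun b =>
    Set.ext_iff.1 h ⟨⟨i, t⟩, b⟩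

theorem graph_subset (s : FnProd T) : s.graph ⊆ s.points ×ˢ Set.univ :=
  fun _ hz => ⟨ne_of_eq_of_ne hz (Option.some_ne_none _), Set.mem_univ _⟩

def tasks (Z : Set (Σ i, T i)) : Set (FnProd T) :=
  {e | e.points.Finite ∧ e.points ⊆ Z}

theorem countable_tasks {Z : Set (Σ i, T i)} (hZ : Z.Countable) : (tasks Z).Countable := by
  refine ((countable_ofPred_finite_subset (hZ.prod countable_univ)).preimage
    graph_injective).mono ?_
  rintro e ⟨hfin, heZ⟩
  exact ⟨(hfin.prod finite_univ).subset e.graph_subset,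
    e.graph_subset.trans (prod_mono heZ subset_rfl)⟩

open Classical in
noncomputable def taskEnum (Z : Set (Σ i, T i)) : ℕ → FnProd T :=
  if h : (tasks Z).Countable then enumerateCountable h ⊤ else fun _ => ⊤

theorem exists_taskEnum_eq {Z : Set (Σ i, T i)} (hZ : Z.Countable) {e : FnProd T}
    (he : e ∈ tasks Z) : ∃ j, taskEnum Z j = e := by
  rw [taskEnum, dif_pos (countable_tasks hZ)]
  exact subset_range_enumerate _ _ he

/-- Stage `k + 1` handles task number `(unpair k).2` of the points collected by stage
`(unpair k).1`, so every task of every stage is handled at some later stage. -/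
noncomputable def stage (p : FnProd T) (sel : FnProd T → FnProd T) :
    ℕ → FnProd T × Set (Σ i, T i)
  | 0 => (p, ∅)
  | k + 1 =>
    let s := sel (merge (taskEnum (stage p sel k.unpair.1).2 k.unpair.2) (stage p sel k).1)
    (absorb (stage p sel k).1 s, (stage p sel k).2 ∪ s.points)
decreasing_by all_goals have := Nat.unpair_left_le k; omega

section stage

variable (p : FnProd T) (sel : FnProd T → FnProd T)

noncomputable def task (k : ℕ) : FnProd T :=
  taskEnum (stage p sel k.unpair.1).2 k.unpair.2

theorem stage_succ (k : ℕ) : stage p sel (k + 1) =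
    (absorb (stage p sel k).1 (sel (merge (task p sel k) (stage p sel k).1)),
      (stage p sel k).2 ∪ (sel (merge (task p sel k) (stage p sel k).1)).points) := by
  rw [stage]
  rfl

theorem stage_fst_succ_pleH (k : ℕ) : (stage p sel (k + 1)).1.pleH (stage p sel k).1 := by
  rw [stage_succ]
  exact absorb_pleH _ _

theorem countable_stage_snd (k : ℕ) : (stage p sel k).2.Countable := by
  induction k with
  | zero => rw [stage]; exact countable_empty
  | succ k ih => rw [stage_succ]; exact ih.union (countable_points _)

theorem monotone_stage_snd : Monotone fun k => (stage p sel k).2 :=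
  monotone_nat_of_le_succ fun k => by rw [stage_succ]; exact subset_union_left

theorem exists_task_eq {e : FnProd T} (hfin : e.points.Finite)
    (he : e.points ⊆ ⋃ k, (stage p sel k).2) : ∃ k, task p sel k = e := by
  obtain ⟨m, hm⟩ :=
    (monotone_stage_snd p sel).directed_le.exists_mem_subset_of_finset_subset_biUnion
      (s := hfin.toFinset) (by simpa using he)
  obtain ⟨j, hj⟩ :=
    exists_taskEnum_eq (countable_stage_snd p sel m) ⟨hfin, by simpa using hm⟩
  exact ⟨Nat.pair m j, by simp [task, Nat.unpair_pair, hj]⟩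

end stage

theorem exists_pleH_forall_compat_exists_compat_sel (p : FnProd T) (sel : FnProd T → FnProd T)
    (hsel : ∀ r, (sel r).ple r) :
    ∃ q : FnProd T, q.pleH p ∧
      ∃ r : ℕ → FnProd T, ∀ a : FnProd T, a.Compat q → ∃ k, a.Compat (sel (r k)) := by
  obtain ⟨q, hq⟩ := exists_pleH_of_chain _ (stage_fst_succ_pleH p sel)
  refine ⟨q, by simpa only [stage] using hq 0, fun k => merge (task p sel k) (stage p sel k).1,
    fun a ha => ?_⟩
  set Z := ⋃ k, (stage p sel k).2
  set e := a.restrict {z | z.1 ∈ clash a q ∧ z ∈ Z}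
  have heZ : e.points ⊆ Z := (points_restrict_subset _ _).trans fun _ hz => hz.2
  obtain ⟨k, hk⟩ := exists_task_eq p sel
    (finite_points (ha.clash_finite.subset (support_restrict_subset fun _ hz => hz.1))) heZ
  have hs : (sel (merge (task p sel k) (stage p sel k).1)).points ⊆ Z := fun z hz =>
    mem_iUnion.2 ⟨k + 1, by rw [stage_succ]; exact Or.inr hz⟩
  refine ⟨k, ha.compat_of_pleH_absorb (by rw [← hk]; exact hsel _) hs ?_⟩
  simpa only [stage_succ] using hq (k + 1)

theorem exists_pleH_countable_compat (p : FnProd T) {A : Set (FnProd T)} (hA : MaxAntichain A) :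
    ∃ q : FnProd T, q.pleH p ∧ {a ∈ A | a.Compat q}.Countable := by
  have hbelow : ∀ r : FnProd T, ∃ s : FnProd T, s.ple r ∧ ∃ c ∈ A, s.ple c := fun r =>
    let ⟨c, hc, w, hwc, hwr⟩ := hA.exists_compat r
    ⟨w, hwr, c, hc, hwc⟩
  choose sel hsel c hcA hsc using hbelow
  obtain ⟨q, hqp, r, hr⟩ := exists_pleH_forall_compat_exists_compat_sel p sel hsel
  refine ⟨q, hqp, (countable_iUnion fun k =>
    (hA.subsingleton_compat (hcA (r k)) (hsc (r k))).countable).mono ?_⟩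
  rintro a ⟨haA, haq⟩
  obtain ⟨k, hk⟩ := hr a haq
  exact mem_iUnion.2 ⟨k, haA, hk⟩

end PseudoProd

theorem miyamoto_axiomA (X : Type) (κ : X → Cardinal) :
    (∀ (n : ℕ) (p q : PseudoProd (fun i : X => Fn (κ i).ord.ToType)),
        PseudoProd.axSeq (n + 1) p q → PseudoProd.axSeq n p q) ∧
    (∀ p q : PseudoProd (fun i : X => Fn (κ i).ord.ToType),
        PseudoProd.axSeq 0 p q → p.ple q) ∧
    (∀ p : ℕ → PseudoProd (fun i : X => Fn (κ i).ord.ToType),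
        (∀ n, PseudoProd.axSeq (n + 1) (p (n + 1)) (p n)) →
        ∃ q, ∀ n, PseudoProd.axSeq n q (p n)) ∧
    (∀ (p : PseudoProd (fun i : X => Fn (κ i).ord.ToType)) (n : ℕ)
        (A : Set (PseudoProd (fun i : X => Fn (κ i).ord.ToType))),
        PseudoProd.MaxAntichain A →
        ∃ q, PseudoProd.axSeq n q p ∧ {r ∈ A | r.Compat q}.Countable) := by
  refine ⟨fun n p q h => PseudoProd.axSeq_of_pleH (PseudoProd.axSeq_succ.1 h),
    fun p q => PseudoProd.axSeq_zero.1, fun p hp => ?_, fun p n A hA => ?_⟩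
  · obtain ⟨q, hq⟩ := PseudoProd.exists_pleH_of_chain p fun n => PseudoProd.axSeq_succ.1 (hp n)
    exact ⟨q, fun n => PseudoProd.axSeq_of_pleH (hq n)⟩
  · obtain ⟨q, hqp, hA⟩ := PseudoProd.exists_pleH_countable_compat p hA
    exact ⟨q, PseudoProd.axSeq_of_pleH hqp, hA⟩
end
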